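/- For m ≥ 1, n ≥ 1, k ≥ 0: the interpolated truncated multiple zeta value decomposes over compositions: ∑_{n ≥ ℓ_1 ≥ ... ≥ ℓ_k ≥ 1} t^{σ(ℓ)}/(ℓ_1···ℓ_k)^m = ∑_{(r_1,...,r_s) composition of k} t^{k-s} · ζ_n(m·r_1, ..., m·r_s), where ζ_n(i_1,...,i_s) = ∑_{n ≥ j_1 > ... > j_s ≥ 1} 1/(j_1^{i_1}···j_s^{i_s}). -/

import Mathlib

/-- The set of weakly decreasing `k`-tuples with entries in `{1,...,n}`. -/
def multisetTuples (n k : ℕ) : Finset (Fin k → ℕ) :=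
  (Fintype.piFinset fun _ : Fin k => Finset.Icc 1 n).filter
    fun ℓ => ∀ i j : Fin k, i ≤ j → ℓ j ≤ ℓ i

/-- The number of adjacent equalities `ℓ_j = ℓ_{j+1}` in a tuple. -/
def sigmaEq {k : ℕ} (ℓ : Fin k → ℕ) : ℕ :=
  (Finset.univ.filter fun p : Fin k × Fin k =>
    (p.2 : ℕ) = (p.1 : ℕ) + 1 ∧ ℓ p.1 = ℓ p.2).card

/-- The set of strictly decreasing `k`-tuples with entries in `{1,...,n}`. -/
def setTuples (n k : ℕ) : Finset (Fin k → ℕ) :=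
  (Fintype.piFinset fun _ : Fin k => Finset.Icc 1 n).filter
    fun ℓ => ∀ i j : Fin k, i < j → ℓ j < ℓ i

/-!
Cut a weakly decreasing tuple `ℓ` into its maximal runs of equal entries. The run lengths form a
composition `c` of `k` with `s` parts, the run values form a strictly decreasing tuple `j` with
`ℓ = j ∘ c.index`, and every adjacent equality of `ℓ` lies inside a run, so `σ(ℓ) = k - s`.
Conversely `(c, j) ↦ j ∘ c.index` recovers `c` as the runs of the tuple it produces, so summing
over `ℓ` is summing over the pairs `(c, j)`, and the weight of `ℓ` becomes `t^(k-s) ∏ j_b^(-m r_b)`.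
-/

open Finset

-- Holds vacuously at `0`, which has no predecessor.
def IsRunStart {α : Type*} {k : ℕ} (g : Fin k → α) (j : Fin k) : Prop :=
  ∀ i : Fin k, (j : ℕ) = i + 1 → g i ≠ g j

instance {α : Type*} [DecidableEq α] {k : ℕ} (g : Fin k → α) : DecidablePred (IsRunStart g) :=
  fun _ => inferInstanceAs (Decidable (∀ _, _))

section IsRunStart

variable {α β : Type*} {k : ℕ}

lemma isRunStart_iff_of_val_eq_succ {g : Fin k → α} {i j : Fin k} (hij : (j : ℕ) = i + 1) :
    IsRunStart g j ↔ g i ≠ g j :=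
  ⟨fun h => h i hij, fun h i' hi' => (Fin.ext (by omega) : i' = i) ▸ h⟩

lemma isRunStart_comp_iff {f : α → β} (hf : Function.Injective f) {g : Fin k → α} {j : Fin k} :
    IsRunStart (f ∘ g) j ↔ IsRunStart g j := by
  simp only [IsRunStart, Function.comp_apply, hf.ne_iff]

end IsRunStart

namespace Composition

variable {k : ℕ}

section Blocks

variable (c : Composition k)

def blockStart (b : Fin c.length) : Fin k := c.embedding b ⟨0, c.one_le_blocksFun b⟩

@[simp]
lemma coe_blockStart (b : Fin c.length) : (c.blockStart b : ℕ) = c.sizeUpTo b := by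
  simp [blockStart]

@[simp]
lemma index_blockStart (b : Fin c.length) : c.index (c.blockStart b) = b :=
  c.index_embedding _ _

lemma blockStart_injective : Function.Injective c.blockStart :=
  Function.LeftInverse.injective c.index_blockStart

lemma index_monotone : Monotone c.index := by
  intro i j hij
  by_contra! h
  have hj := c.lt_sizeUpTo_index_succ j
  have hi := c.sizeUpTo_index_le i
  have := c.monotone_sizeUpTo (show (c.index j : ℕ) + 1 ≤ c.index i from h)
  simp only [Fin.le_def] at hij
  simp only [Fin.val_succ] at hj
  omega

lemma index_eq_iff {i : Fin k} {b : Fin c.length} :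
    c.index i = b ↔ c.sizeUpTo b ≤ i ∧ (i : ℕ) < c.sizeUpTo ((b : ℕ) + 1) := by
  rw [eq_comm, ← mem_range_embedding_iff', mem_range_embedding_iff]

lemma isRunStart_index_iff {j : Fin k} : IsRunStart c.index j ↔ j ∈ Set.range c.blockStart := by
  have hle := c.sizeUpTo_index_le j
  have hlt := c.lt_sizeUpTo_index_succ j
  rw [Fin.val_succ] at hlt
  constructor
  · intro hj
    refine ⟨c.index j, Fin.ext ?_⟩
    rw [coe_blockStart]
    by_contra hne
    exact hj ⟨j - 1, by omega⟩ (by simp only; omega)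
      (c.index_eq_iff.2 ⟨by simp only; omega, by simp only; omega⟩)
  · rintro ⟨b, rfl⟩ i hi hib
    have := c.sizeUpTo_index_le i
    rw [hib, index_blockStart] at this
    simp only [coe_blockStart] at hi
    omega

lemma castSucc_mem_boundaries_iff {j : Fin k} :
    j.castSucc ∈ c.boundaries ↔ j ∈ Set.range c.blockStart := by
  simp only [boundaries, boundary, mem_map, mem_univ, true_and, RelEmbedding.coe_toEmbedding,
    OrderEmbedding.coe_ofStrictMono, Fin.ext_iff, Fin.val_castSucc, Set.mem_range, coe_blockStart]
  constructor
  · rintro ⟨b, hb⟩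
    have hb' : (b : ℕ) < c.length := by
      by_contra! h
      rw [c.sizeUpTo_ofLength_le _ h] at hb
      omega
    exact ⟨⟨b, hb'⟩, hb⟩
  · rintro ⟨b, hb⟩
    exact ⟨b.castSucc, hb⟩

lemma eq_of_range_blockStart_eq {c c' : Composition k}
    (h : Set.range c.blockStart = Set.range c'.blockStart) : c = c' := by
  apply (compositionEquiv k).injective
  ext i
  simp only [compositionEquiv, Equiv.coe_fn_mk, toCompositionAsSet_boundaries]
  induction i using Fin.lastCases with
  | last => exact iff_of_true c.toCompositionAsSet.getLast_mem c'.toCompositionAsSet.getLast_mem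
  | cast j => rw [castSucc_mem_boundaries_iff, castSucc_mem_boundaries_iff, h]

lemma apply_eq_apply_blockStart_index {α : Type*} {f : Fin k → α}
    (hf : ∀ i j : Fin k, (j : ℕ) = i + 1 → c.index i = c.index j → f i = f j) (i : Fin k) :
    f i = f (c.blockStart (c.index i)) := by
  obtain ⟨i, hi⟩ := i
  induction i with
  | zero =>
    have : c.sizeUpTo (c.index ⟨0, hi⟩) ≤ 0 := c.sizeUpTo_index_le ⟨0, hi⟩
    exact congrArg f (Fin.ext (by simp only [coe_blockStart]; omega))
  | succ i ih =>
    by_cases h : c.index ⟨i, by omega⟩ = c.index ⟨i + 1, hi⟩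
    · rw [← hf _ _ rfl h, ih, h]
    · obtain ⟨b, hb⟩ := c.isRunStart_index_iff.1 ((isRunStart_iff_of_val_eq_succ rfl).2 h)
      rw [← hb, index_blockStart]

lemma prod_index {M : Type*} [CommMonoid M] (f : Fin c.length → M) :
    ∏ i, f (c.index i) = ∏ b, f b ^ c.blocksFun b := by
  rw [← c.prod_prod_apply_embedding]
  simp [index_embedding]

end Blocks

section Runs

variable {α : Type*} [DecidableEq α]

def runs (ℓ : Fin k → α) : Composition k :=
  CompositionAsSet.toComposition
    { boundaries := insert (Fin.last k) ((univ.filter (IsRunStart ℓ)).map Fin.castSuccEmb)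
      zero_mem := by
        rcases k with _ | k
        · exact mem_insert_self _ _
        · exact mem_insert_of_mem (mem_map.2 ⟨0, mem_filter.2 ⟨mem_univ _, by
            intro i hi
            simp at hi⟩, rfl⟩)
      getLast_mem := mem_insert_self _ _ }

lemma mem_range_blockStart_runs {ℓ : Fin k → α} {j : Fin k} :
    j ∈ Set.range (runs ℓ).blockStart ↔ IsRunStart ℓ j := by
  rw [← castSucc_mem_boundaries_iff, runs, CompositionAsSet.toComposition_boundaries]
  simp [Fin.castSucc_ne_last]

lemma apply_eq_apply_blockStart_runs (ℓ : Fin k → α) (i : Fin k) :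
    ℓ i = ℓ ((runs ℓ).blockStart ((runs ℓ).index i)) := by
  refine (runs ℓ).apply_eq_apply_blockStart_index (fun i j hij hidx => ?_) i
  by_contra hne
  have hj := (runs ℓ).isRunStart_index_iff.2
    (mem_range_blockStart_runs.2 ((isRunStart_iff_of_val_eq_succ hij).2 hne))
  exact (isRunStart_iff_of_val_eq_succ hij).1 hj hidx

lemma runs_comp_index (c : Composition k) {j : Fin c.length → α}
    (hj : Function.Injective j) : runs (j ∘ c.index) = c :=
  eq_of_range_blockStart_eq <| Set.ext fun _ => by
    rw [mem_range_blockStart_runs, isRunStart_comp_iff hj, isRunStart_index_iff]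

lemma strictAnti_comp_blockStart_runs [PartialOrder α] {ℓ : Fin k → α} (hℓ : Antitone ℓ) :
    StrictAnti (ℓ ∘ (runs ℓ).blockStart) := by
  intro b b' hbb'
  set s := (runs ℓ).blockStart b'
  have hlt : (runs ℓ).sizeUpTo b < s := by
    have := (runs ℓ).monotone_sizeUpTo (show (b : ℕ) + 1 ≤ b' from hbb')
    have := (runs ℓ).sizeUpTo_strict_mono b.2
    simp only [s, coe_blockStart]
    omega
  let i : Fin k := ⟨s - 1, by omega⟩
  have hne : ℓ i ≠ ℓ s := mem_range_blockStart_runs.1 ⟨b', rfl⟩ i (by simp only [i]; omega)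
  calc ℓ s < ℓ i := lt_of_le_of_ne (hℓ (Fin.le_def.2 (by simp only [i]; omega))) hne.symm
    _ ≤ ℓ ((runs ℓ).blockStart b) := hℓ (Fin.le_def.2 (by simp only [i, coe_blockStart]; omega))

lemma card_isRunStart (ℓ : Fin k → α) : #{j | IsRunStart ℓ j} = (runs ℓ).length := by
  have : ({j | IsRunStart ℓ j} : Finset (Fin k)) = univ.image (runs ℓ).blockStart := by
    ext j
    simp [← mem_range_blockStart_runs]
  rw [this, card_image_of_injective _ (runs ℓ).blockStart_injective, card_univ, Fintype.card_fin]

end Runs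

end Composition

lemma sigmaEq_eq_card_not_isRunStart {k : ℕ} (ℓ : Fin k → ℕ) :
    sigmaEq ℓ = #{j | ¬IsRunStart ℓ j} := by
  refine card_bij (fun p _ => p.2) (fun p hp => ?_) (fun p hp q hq hpq => ?_) (fun j hj => ?_)
  · obtain ⟨hadj, heq⟩ := (mem_filter.1 hp).2
    exact mem_filter.2 ⟨mem_univ _, fun h => h p.1 hadj heq⟩
  · have := (mem_filter.1 hp).2.1
    have := (mem_filter.1 hq).2.1
    exact Prod.ext (Fin.ext (by omega)) hpq
  · simp only [IsRunStart, mem_filter, mem_univ, true_and, not_forall, not_not] at hj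
    obtain ⟨i, hij, heq⟩ := hj
    exact ⟨(i, j), mem_filter.2 ⟨mem_univ _, hij, heq⟩, rfl⟩

lemma sigmaEq_eq_sub_length_runs {k : ℕ} (ℓ : Fin k → ℕ) :
    sigmaEq ℓ = k - (Composition.runs ℓ).length := by
  have := card_filter_add_card_filter_not (s := univ) (IsRunStart ℓ)
  rw [card_univ, Fintype.card_fin, Composition.card_isRunStart] at this
  rw [sigmaEq_eq_card_not_isRunStart]
  omega

lemma mem_multisetTuples {n k : ℕ} {ℓ : Fin k → ℕ} :
    ℓ ∈ multisetTuples n k ↔ (∀ i, ℓ i ∈ Icc 1 n) ∧ Antitone ℓ := by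
  simp only [multisetTuples, mem_filter, Fintype.mem_piFinset]
  rfl

lemma mem_setTuples {n k : ℕ} {j : Fin k → ℕ} :
    j ∈ setTuples n k ↔ (∀ i, j i ∈ Icc 1 n) ∧ StrictAnti j := by
  simp only [setTuples, mem_filter, Fintype.mem_piFinset]
  rfl

lemma sum_setTuples_comp_index_eq_sum_runs_eq {M : Type*} [AddCommMonoid M] (n : ℕ) {k : ℕ}
    (c : Composition k) (f : (Fin k → ℕ) → M) :
    ∑ j ∈ setTuples n c.length, f (j ∘ c.index) =
      ∑ ℓ ∈ multisetTuples n k with Composition.runs ℓ = c, f ℓ := by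
  refine sum_nbij' (· ∘ c.index) (· ∘ c.blockStart) (fun j hj => ?_) (fun ℓ hℓ => ?_)
    (fun j _ => ?_) (fun ℓ hℓ => ?_) (fun _ _ => rfl)
  · obtain ⟨hval, hanti⟩ := mem_setTuples.1 hj
    exact mem_filter.2 ⟨mem_multisetTuples.2 ⟨fun i => hval _,
      hanti.antitone.comp_monotone c.index_monotone⟩, Composition.runs_comp_index c hanti.injective⟩
  · rw [mem_filter] at hℓ
    obtain ⟨hℓ, rfl⟩ := hℓ
    rw [mem_multisetTuples] at hℓ
    obtain ⟨hval, hanti⟩ := hℓ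
    exact mem_setTuples.2 ⟨fun b => hval _, Composition.strictAnti_comp_blockStart_runs hanti⟩
  · funext b
    simp
  · obtain ⟨-, rfl⟩ := mem_filter.1 hℓ
    funext i
    exact (Composition.apply_eq_apply_blockStart_runs ℓ i).symm

theorem interpolated_zeta_composition_decomposition_general (m n k : ℕ)
    (t : ℝ) :
    (∑ ℓ ∈ multisetTuples n k, t ^ sigmaEq ℓ * ∏ i, (1 : ℝ) / (ℓ i : ℝ) ^ m) =
      ∑ c : Composition k,
        t ^ (k - c.length) *
          ∑ j ∈ setTuples n c.length,
            ∏ i : Fin c.length, (1 : ℝ) / (j i : ℝ) ^ (m * c.blocksFun i) := by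
  rw [← sum_fiberwise _ Composition.runs]
  refine sum_congr rfl fun c _ => ?_
  rw [mul_sum, ← sum_setTuples_comp_index_eq_sum_runs_eq]
  refine sum_congr rfl fun j hj => ?_
  rw [sigmaEq_eq_sub_length_runs, Composition.runs_comp_index c (mem_setTuples.1 hj).2.injective,
    Function.comp_def, c.prod_index fun b => 1 / (j b : ℝ) ^ m]
  simp only [div_pow, one_pow, pow_mul]

theorem interpolated_zeta_composition_decomposition (m n k : ℕ) (hm : 1 ≤ m) (hn : 1 ≤ n)
    (t : ℝ) :
    (∑ ℓ ∈ multisetTuples n k, t ^ sigmaEq ℓ * ∏ i, (1 : ℝ) / (ℓ i : ℝ) ^ m) =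
      ∑ c : Composition k,
        t ^ (k - c.length) *
          ∑ j ∈ setTuples n c.length,
            ∏ i : Fin c.length, (1 : ℝ) / (j i : ℝ) ^ (m * c.blocksFun i) :=
  interpolated_zeta_composition_decomposition_general m n k t
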